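/- For every u ∈ ℝ and α > 0, the function s ↦ e^{αs²} − 1 is nonnegative, and for any τ > 1, q ≥ 1, ε > 0, a continuous function f : ℝ → ℝ satisfying |f(s)| ≤ C e^{4π s²} for all s and f(s)/s → 0 as s → 0 obeys the bound |f(s)·s| ≤ ε s² + C'·|s|^q·(e^{4πτ s²} − 1) for all s ∈ ℝ, for some constant C' > 0 depending on ε, q, τ. -/

import Mathlib

/-!
For `|s| < δ` the hypothesis `f s / s → 0` gives `|f s * s| ≤ ε s²` directly. For `|s| ≥ δ` the
growth bound gives `|f s * s| ≤ C e^{4π s²} |s|`, and on that range both factors are dominated by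
the remainder term: `|s| ≤ δ^{1-q} |s|^q`, and `e^{4πτ s²} - 1 = e^{4πτ s²} (1 - e^{-4πτ s²})`
is at least `(1 - e^{-4πτ δ²}) e^{4π s²}` because `τ ≥ 1`.
-/

open Real Filter Topology

lemma exp_mul_sq_sub_one_nonneg {α : ℝ} (hα : 0 ≤ α) (u : ℝ) : 0 ≤ exp (α * u ^ 2) - 1 :=
  sub_nonneg.2 (one_le_exp (by positivity))

lemma exists_abs_mul_le_of_tendsto_div_zero {f : ℝ → ℝ}
    (hlim : Tendsto (fun s => f s / s) (𝓝[≠] 0) (𝓝 0)) {ε : ℝ} (hε : 0 < ε) :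
    ∃ δ > 0, ∀ s, |s| < δ → |f s * s| ≤ ε * s ^ 2 := by
  obtain ⟨δ, hδ, hclose⟩ := Metric.tendsto_nhdsWithin_nhds.mp hlim ε hε
  refine ⟨δ, hδ, fun s hs => ?_⟩
  rcases eq_or_ne s 0 with rfl | hs0
  · simp
  have hquot : |f s| / |s| < ε := by
    simpa using hclose (Set.mem_compl_singleton_iff.2 hs0) (by simpa using hs)
  calc |f s * s| = |f s| / |s| * s ^ 2 := by
        rw [← sq_abs, abs_mul]; field_simp
    _ ≤ ε * s ^ 2 := by gcongr

lemma one_sub_exp_neg_mul_exp_le_exp_sub_one {a b d : ℝ} (hd : 0 ≤ d) (hda : d ≤ a)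
    (hba : b ≤ a) : (1 - exp (-d)) * exp b ≤ exp a - 1 := by
  have : exp (-a) ≤ 1 := exp_le_one_iff.2 (neg_nonpos.2 (hd.trans hda))
  calc (1 - exp (-d)) * exp b ≤ (1 - exp (-a)) * exp a := by gcongr
    _ = exp a - 1 := by rw [sub_mul, ← exp_add]; simp

lemma rpow_sub_one_mul_le_rpow {r x q : ℝ} (hr : 0 < r) (hrx : r ≤ x) (hq : 1 ≤ q) :
    r ^ (q - 1) * x ≤ x ^ q := by
  have hx : x ≠ 0 := (hr.trans_le hrx).ne'
  calc r ^ (q - 1) * x ≤ x ^ (q - 1) * x := by gcongr; linarith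
    _ = x ^ q := by rw [rpow_sub_one hx]; field_simp

lemma mul_exp_mul_sq_le_of_le_abs {β τ δ q s : ℝ} (hβ : 0 ≤ β) (hτ : 1 ≤ τ) (hδ : 0 < δ)
    (hq : 1 ≤ q) (hs : δ ≤ |s|) :
    δ ^ (q - 1) * (1 - exp (-(β * τ * δ ^ 2))) * (exp (β * s ^ 2) * |s|) ≤
      |s| ^ q * (exp (β * τ * s ^ 2) - 1) := by
  have hsq : δ ^ 2 ≤ s ^ 2 := by rw [← sq_abs s]; gcongr
  have hd : 0 ≤ β * τ * δ ^ 2 := mul_nonneg (mul_nonneg hβ (zero_le_one.trans hτ)) (sq_nonneg δ)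
  have hexp : (1 - exp (-(β * τ * δ ^ 2))) * exp (β * s ^ 2) ≤ exp (β * τ * s ^ 2) - 1 :=
    one_sub_exp_neg_mul_exp_le_exp_sub_one hd (by gcongr)
      (by nlinarith [mul_nonneg hβ (sq_nonneg s)])
  calc δ ^ (q - 1) * (1 - exp (-(β * τ * δ ^ 2))) * (exp (β * s ^ 2) * |s|)
        = (δ ^ (q - 1) * |s|) * ((1 - exp (-(β * τ * δ ^ 2))) * exp (β * s ^ 2)) := by ring
    _ ≤ |s| ^ q * (exp (β * τ * s ^ 2) - 1) :=
        mul_le_mul (rpow_sub_one_mul_le_rpow hδ hs hq) hexp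
          (mul_nonneg (sub_nonneg.2 (exp_le_one_iff.2 (neg_nonpos.2 hd))) (exp_pos _).le)
          (by positivity)

theorem stmt_2_general (f : ℝ → ℝ) (C : ℝ) (hC : 0 < C)
    (hgrowth : ∀ s : ℝ, |f s| ≤ C * Real.exp (4 * π * s ^ 2))
    (hlim : Filter.Tendsto (fun s => f s / s) (nhdsWithin 0 {0}ᶜ) (nhds 0))
    (ε q τ : ℝ) (hε : 0 < ε) (hq : 1 ≤ q) (hτ : 1 < τ) :
    (∀ u : ℝ, ∀ α : ℝ, 0 < α → 0 ≤ Real.exp (α * u ^ 2) - 1) ∧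
    ∃ C' : ℝ, 0 < C' ∧ ∀ s : ℝ,
      |f s * s| ≤ ε * s ^ 2 + C' * |s| ^ q * (Real.exp (4 * π * τ * s ^ 2) - 1) := by
  refine ⟨fun u α hα => exp_mul_sq_sub_one_nonneg hα.le u, ?_⟩
  obtain ⟨δ, hδ, hsmall⟩ := exists_abs_mul_le_of_tendsto_div_zero hlim hε
  set K := δ ^ (q - 1) * (1 - exp (-(4 * π * τ * δ ^ 2)))
  have hK : 0 < K :=
    mul_pos (rpow_pos_of_pos hδ _) (sub_pos.2 (exp_lt_one_iff.2 (neg_neg_of_pos (by positivity))))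
  refine ⟨C / K, by positivity, fun s => ?_⟩
  have hrem : 0 ≤ C / K * |s| ^ q * (exp (4 * π * τ * s ^ 2) - 1) :=
    mul_nonneg (by positivity) (exp_mul_sq_sub_one_nonneg (by positivity) s)
  rcases lt_or_ge |s| δ with hs | hs
  · linarith [hsmall s hs]
  calc |f s * s| ≤ C * (exp (4 * π * s ^ 2) * |s|) := by
        rw [abs_mul, ← mul_assoc]; gcongr; exact hgrowth s
    _ = C / K * (K * (exp (4 * π * s ^ 2) * |s|)) := by field_simp
    _ ≤ C / K * (|s| ^ q * (exp (4 * π * τ * s ^ 2) - 1)) :=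
        mul_le_mul_of_nonneg_left
          (mul_exp_mul_sq_le_of_le_abs (by positivity) hτ.le hδ hq hs) (by positivity)
    _ ≤ ε * s ^ 2 + C / K * |s| ^ q * (exp (4 * π * τ * s ^ 2) - 1) := by
        rw [← mul_assoc]; exact le_add_of_nonneg_left (by positivity)

theorem stmt_2 (f : ℝ → ℝ) (hf : Continuous f) (C : ℝ) (hC : 0 < C)
    (hgrowth : ∀ s : ℝ, |f s| ≤ C * Real.exp (4 * π * s ^ 2))
    (hlim : Filter.Tendsto (fun s => f s / s) (nhdsWithin 0 {0}ᶜ) (nhds 0))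
    (ε q τ : ℝ) (hε : 0 < ε) (hq : 1 ≤ q) (hτ : 1 < τ) :
    (∀ u : ℝ, ∀ α : ℝ, 0 < α → 0 ≤ Real.exp (α * u ^ 2) - 1) ∧
    ∃ C' : ℝ, 0 < C' ∧ ∀ s : ℝ,
      |f s * s| ≤ ε * s ^ 2 + C' * |s| ^ q * (Real.exp (4 * π * τ * s ^ 2) - 1) :=
  stmt_2_general f C hC hgrowth hlim ε q τ hε hq hτ
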